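/- arXiv:2407.16033 — 6 statements merged into one kernel-verified Lean document; each statement's English description precedes it below -/
import Mathlib

section
/- Let L be self-adjoint on a Hilbert space with spectrum contained in [1/√P_W, ∞) for some P_W > 0, and let τ > 0. Then the operator inequality 2τ L e^{-τL} (1 - e^{-2τL})^{-1} ≤ R_{W,τ} · Id holds, where R_{W,τ} := 2τ e^{-τ/√P_W} / (√P_W (1 - e^{-2τ/√P_W})) ∈ (0,1). -/
/-!
Write `sinhc x = ∑ x^(2k) / (2k+1)!`, so that `sinhc x * x = (exp x - exp (-x)) / 2` in any real
Banach algebra. Then `1 - e^{-2τL} = 2τ · sinhc(τL) L e^{-τL}`, i.e. every `f = (1 - e^{-2τL}) g`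
equals `sinhc(τL) y` with `y = 2τ L e^{-τL} g`, the vector the operator sends `f` to. The spectral
bound gives `⟪x, L x⟫ ≥ ‖x‖² / √P_W`, hence `⟪x, L^(2k) x⟫ = ‖L^k x‖² ≥ ‖x‖² / √P_W^(2k)`, and
summing the series, `sinhc(τL) ≥ s := sinhc(τ/√P_W)` as quadratic forms. By Cauchy–Schwarz,
`⟪sinhc(τL) y, y⟫ ≤ s⁻¹ ‖sinhc(τL) y‖²`, and `s⁻¹ = R` lies in `(0, 1)` because `sinh a > a`.
-/

open Real RealInnerProductSpace

-- Defined by its series, so that no inverse of `x` is involved.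
noncomputable def sinhc {A : Type*} [Ring A] [Algebra ℝ A] [TopologicalSpace A] (x : A) : A :=
  ∑' k : ℕ, ((2 * k + 1).factorial : ℝ)⁻¹ • x ^ (2 * k)

section Sinhc

variable {A : Type*} [NormedRing A] [NormedAlgebra ℝ A] [CompleteSpace A]

theorem hasSum_sinhc (x : A) :
    HasSum (fun k : ℕ => ((2 * k + 1).factorial : ℝ)⁻¹ • x ^ (2 * k)) (sinhc x) := by
  refine (Summable.of_norm_bounded (g := fun k : ℕ => ‖((2 * k).factorial : ℝ)⁻¹ • x ^ (2 * k)‖)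
    ((NormedSpace.norm_expSeries_summable' x).comp_injective (mul_right_injective₀ two_ne_zero))
    fun k => ?_).hasSum
  simp only [norm_smul, norm_inv, Real.norm_natCast]
  gcongr
  exact Nat.le_succ _

theorem exp_sub_exp_neg_eq_two_smul_sinhc_mul (x : A) :
    NormedSpace.exp x - NormedSpace.exp (-x) = (2 : ℝ) • (sinhc x * x) := by
  set f : ℕ → A := fun n => (n.factorial : ℝ)⁻¹ • (x ^ n - (-x) ^ n)
  have hf : HasSum f (NormedSpace.exp x - NormedSpace.exp (-x)) := by
    simpa only [f, smul_sub] using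
      (NormedSpace.exp_series_hasSum_exp' (𝕂 := ℝ) x).sub (NormedSpace.exp_series_hasSum_exp' (-x))
  have hodd : Function.Injective fun k : ℕ => 2 * k + 1 := fun a b h => by simp only at h; omega
  have heven : ∀ n ∉ Set.range fun k : ℕ => 2 * k + 1, f n = 0 := by
    intro n hn
    rcases Nat.even_or_odd n with h | ⟨k, rfl⟩
    · simp [f, h.neg_pow]
    · exact absurd ⟨k, rfl⟩ hn
  rw [← hodd.hasSum_iff heven] at hf
  refine hf.unique (((hasSum_sinhc x).mul_right x).const_smul (2 : ℝ) |>.congr_fun fun k => ?_)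
  simp only [f, Function.comp, Odd.neg_pow ⟨k, rfl⟩, sub_neg_eq_add, ← two_smul ℝ, smul_smul,
    smul_mul_assoc, ← pow_succ]
  rw [mul_comm]

theorem one_sub_exp_neg_two_smul (x : A) :
    1 - NormedSpace.exp (-((2 : ℝ) • x)) = (2 : ℝ) • (sinhc x * x * NormedSpace.exp (-x)) := by
  -- `NormedSpace.exp_add_of_commute` would require a `ℚ`-normed-algebra structure on `A`.
  have exp_add {y z : A} (h : Commute y z) :
      NormedSpace.exp (y + z) = NormedSpace.exp y * NormedSpace.exp z :=
    NormedSpace.exp_add_of_commute_of_mem_ball (𝕂 := ℝ) h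
      (by simp [NormedSpace.expSeries_radius_eq_top]) (by simp [NormedSpace.expSeries_radius_eq_top])
  have hinv : NormedSpace.exp x * NormedSpace.exp (-x) = 1 := by
    rw [← exp_add (Commute.neg_right (Commute.refl x)), add_neg_cancel,
      NormedSpace.exp_zero]
  have hsq : NormedSpace.exp (-x) * NormedSpace.exp (-x) = NormedSpace.exp (-((2 : ℝ) • x)) := by
    rw [← exp_add (Commute.refl _), two_smul, neg_add]
  rw [← hinv, ← hsq, ← sub_mul, exp_sub_exp_neg_eq_two_smul_sinhc_mul, smul_mul_assoc]

end Sinhc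

theorem Real.sinhc_mul_self (a : ℝ) : sinhc a * a = sinh a := by
  have h := exp_sub_exp_neg_eq_two_smul_sinhc_mul a
  rw [← Real.exp_eq_exp_ℝ, smul_eq_mul] at h
  rw [Real.sinh_eq, h]
  ring

theorem Real.inv_sinhc_eq {a : ℝ} (ha : a ≠ 0) :
    (sinhc a)⁻¹ = 2 * a * rexp (-a) / (1 - rexp (-(2 * a))) := by
  have hsinh : sinh a ≠ 0 := Real.sinh_ne_zero.mpr ha
  have hden : 1 - rexp (-(2 * a)) ≠ 0 := by
    rw [sub_ne_zero, ne_comm, Ne, Real.exp_eq_one_iff]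
    simpa using ha
  have hq : rexp (-(2 * a)) = rexp (-a) * rexp (-a) := by rw [← Real.exp_add]; ring_nf
  have hinv : rexp a * rexp (-a) = 1 := by rw [← Real.exp_add, add_neg_cancel, Real.exp_zero]
  have hs : sinhc a = sinh a / a := by rw [← Real.sinhc_mul_self, mul_div_cancel_right₀ _ ha]
  rw [hs, inv_div, div_eq_div_iff hsinh hden, Real.sinh_eq, hq]
  linear_combination (-a) * hinv

theorem Real.one_lt_sinhc {a : ℝ} (ha : 0 < a) : 1 < sinhc a := by
  have h : 1 * a < sinhc a * a := by
    rw [one_mul, Real.sinhc_mul_self]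
    exact Real.self_lt_sinh_iff.mpr ha
  exact lt_of_mul_lt_mul_right h ha.le

theorem IsSelfAdjoint.mul_norm_sq_le_inner_of_spectrum_subset_Ici
    {H : Type*} [NormedAddCommGroup H] [InnerProductSpace ℝ H] [CompleteSpace H]
    {T : H →L[ℝ] H} (hT : IsSelfAdjoint T) {c : ℝ} (hc : spectrum ℝ T ⊆ Set.Ici c) (x : H) :
    c * ‖x‖ ^ 2 ≤ ⟪x, T x⟫ := by
  rcases subsingleton_or_nontrivial H with _ | _
  · simp [Subsingleton.elim x 0]
  -- The spectrum of `S = M - T` lies in `[0, M - c]`, and `‖S‖` is its spectral radius.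
  set M : ℝ := ‖T‖ + |c|
  set S : H →L[ℝ] H := algebraMap ℝ (H →L[ℝ] H) M - T
  have hS : IsSelfAdjoint S := (IsSelfAdjoint.algebraMap _ (.all M)).sub hT
  have hspecS : ∀ s ∈ spectrum ℝ S, ‖s‖ ≤ M - c := by
    intro s hs
    rw [← spectrum.singleton_sub_eq] at hs
    obtain ⟨t, ht, rfl⟩ : ∃ t ∈ spectrum ℝ T, M - t = s := by simpa using hs
    have htT : |t| ≤ ‖T‖ := by simpa using spectrum.subset_closedBall_norm T ht
    have hct : c ≤ t := hc ht
    rw [Real.norm_eq_abs, abs_le]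
    constructor <;> linarith [abs_le.mp htT, le_abs_self c, neg_abs_le c]
  have hnormS : ‖S‖ ≤ M - c := by
    have h := ContinuousLinearMap.spectralRadius_eq_nnnorm S hS
    have hMc : 0 ≤ M - c := by linarith [norm_nonneg T, le_abs_self c]
    have hle : (‖S‖₊ : ENNReal) ≤ (M - c).toNNReal := h ▸ iSup₂_le fun s hs =>
      ENNReal.coe_le_coe.mpr ((Real.le_toNNReal_iff_coe_le hMc).mpr (hspecS s hs))
    exact (Real.le_toNNReal_iff_coe_le hMc).mp (ENNReal.coe_le_coe.mp hle)
  have hxS : ⟪x, S x⟫ = M * ‖x‖ ^ 2 - ⟪x, T x⟫ := by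
    simp [S, Algebra.algebraMap_eq_smul_one, inner_sub_right, real_inner_smul_right]
  have hSx : ⟪x, S x⟫ ≤ (M - c) * ‖x‖ ^ 2 := calc
    ⟪x, S x⟫ ≤ ‖x‖ * ‖S x‖ := real_inner_le_norm _ _
    _ ≤ ‖x‖ * (‖S‖ * ‖x‖) := by gcongr; exact S.le_opNorm x
    _ ≤ ‖x‖ * ((M - c) * ‖x‖) := by gcongr
    _ = (M - c) * ‖x‖ ^ 2 := by ring
  linarith

theorem mul_norm_le_norm_of_mul_norm_sq_le_inner {E : Type*} [NormedAddCommGroup E]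
    [InnerProductSpace ℝ E] {x y : E} {c : ℝ} (h : c * ‖x‖ ^ 2 ≤ ⟪x, y⟫) : c * ‖x‖ ≤ ‖y‖ := by
  rcases (norm_nonneg x).eq_or_lt with hx | hx
  · rw [← hx, mul_zero]
    exact norm_nonneg y
  · refine le_of_mul_le_mul_right ?_ hx
    nlinarith [real_inner_le_norm x y]

theorem inner_le_inv_mul_norm_sq_of_mul_norm_sq_le_inner {E : Type*} [NormedAddCommGroup E]
    [InnerProductSpace ℝ E] {x y : E} {s : ℝ} (hs : 0 < s) (h : s * ‖x‖ ^ 2 ≤ ⟪x, y⟫) :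
    ⟪y, x⟫ ≤ s⁻¹ * ‖y‖ ^ 2 := by
  have hx : ‖x‖ ≤ s⁻¹ * ‖y‖ := by
    rw [le_inv_mul_iff₀ hs]
    exact mul_norm_le_norm_of_mul_norm_sq_le_inner h
  calc ⟪y, x⟫ ≤ ‖y‖ * ‖x‖ := real_inner_le_norm y x
    _ ≤ ‖y‖ * (s⁻¹ * ‖y‖) := by gcongr
    _ = s⁻¹ * ‖y‖ ^ 2 := by ring

section SelfAdjoint

variable {H : Type*} [NormedAddCommGroup H] [InnerProductSpace ℝ H] [CompleteSpace H]
  {T : H →L[ℝ] H} {c : ℝ}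

theorem IsSelfAdjoint.pow_two_mul_mul_norm_sq_le_inner (hT : IsSelfAdjoint T) (hc : 0 ≤ c)
    (h : ∀ x, c * ‖x‖ ^ 2 ≤ ⟪x, T x⟫) (k : ℕ) (x : H) :
    c ^ (2 * k) * ‖x‖ ^ 2 ≤ ⟪x, (T ^ (2 * k)) x⟫ := by
  have hpow : c ^ k * ‖x‖ ≤ ‖(T ^ k) x‖ := by
    induction k with
    | zero => simp
    | succ k ih =>
      rw [pow_succ', pow_succ', mul_apply_eq_comp, mul_assoc]
      exact (mul_le_mul_of_nonneg_left ih hc).trans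
        (mul_norm_le_norm_of_mul_norm_sq_le_inner (h _))
  have hsq : ⟪x, (T ^ (2 * k)) x⟫ = ‖(T ^ k) x‖ ^ 2 := by
    rw [two_mul, pow_add, mul_apply_eq_comp, ← real_inner_self_eq_norm_sq]
    exact ((hT.pow k).isSymmetric x ((T ^ k) x)).symm
  rw [hsq, pow_mul', ← mul_pow]
  gcongr

theorem IsSelfAdjoint.sinhc_mul_norm_sq_le_inner_sinhc (hT : IsSelfAdjoint T) (hc : 0 ≤ c)
    (h : ∀ x, c * ‖x‖ ^ 2 ≤ ⟪x, T x⟫) (x : H) : sinhc c * ‖x‖ ^ 2 ≤ ⟪x, sinhc T x⟫ := by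
  have happly : HasSum (fun k : ℕ => (((2 * k + 1).factorial : ℝ)⁻¹ • T ^ (2 * k)) x)
      (sinhc T x) := by
    simpa only [ContinuousLinearMap.apply_apply] using
      (ContinuousLinearMap.apply ℝ H x).hasSum (hasSum_sinhc T)
  have hinner : HasSum (fun k : ℕ => ⟪x, (((2 * k + 1).factorial : ℝ)⁻¹ • T ^ (2 * k)) x⟫)
      ⟪x, sinhc T x⟫ :=
    (innerSL ℝ x).hasSum happly
  refine hasSum_le (fun k => ?_) ((hasSum_sinhc c).mul_right _) hinner
  rw [smul_apply, real_inner_smul_right, smul_eq_mul, mul_assoc]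
  gcongr
  exact hT.pow_two_mul_mul_norm_sq_le_inner hc h k x

end SelfAdjoint

theorem stmt3_general
    {H : Type*} [NormedAddCommGroup H] [InnerProductSpace ℝ H] [CompleteSpace H]
    (L : H →L[ℝ] H) (hsa : IsSelfAdjoint L)
    (P_W τ : ℝ) (hPW : 0 < P_W) (hτ : 0 < τ)
    (hspec : spectrum ℝ L ⊆ Set.Ici (1 / Real.sqrt P_W))
    (Minv : H →L[ℝ] H)
    (hMinv₂ : (ContinuousLinearMap.id ℝ H - NormedSpace.exp (-((2 * τ) • L))).comp Minv
      = ContinuousLinearMap.id ℝ H) :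
    let R : ℝ := 2 * τ * Real.exp (-(τ / Real.sqrt P_W)) /
      (Real.sqrt P_W * (1 - Real.exp (-(2 * τ / Real.sqrt P_W))))
    (R ∈ Set.Ioo (0:ℝ) 1) ∧
    ∀ f : H, ⟪f, ((2 * τ) • (L.comp ((NormedSpace.exp (-(τ • L))).comp Minv))) f⟫
      ≤ R * ‖f‖ ^ 2 := by
  set p := Real.sqrt P_W
  intro R
  have hp : 0 < p := Real.sqrt_pos.mpr hPW
  have hR : R = (sinhc (τ / p))⁻¹ := by
    rw [Real.inv_sinhc_eq (by positivity)]
    simp only [R]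
    field_simp
  have hsinhc : 1 < sinhc (τ / p) := Real.one_lt_sinhc (by positivity)
  refine ⟨hR ▸ ⟨by positivity, inv_lt_one_of_one_lt₀ hsinhc⟩, fun f => ?_⟩
  have hτL : ∀ x, τ / p * ‖x‖ ^ 2 ≤ ⟪x, (τ • L) x⟫ := fun x => by
    rw [smul_apply, real_inner_smul_right, div_eq_mul_one_div, mul_assoc]
    exact mul_le_mul_of_nonneg_left (hsa.mul_norm_sq_le_inner_of_spectrum_subset_Ici hspec x) hτ.le
  have hC := ((IsSelfAdjoint.all τ).smul hsa).sinhc_mul_norm_sq_le_inner_sinhc (by positivity) hτL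
  set A := (2 * τ) • (L.comp ((NormedSpace.exp (-(τ • L))).comp Minv))
  have hf : f = sinhc (τ • L) (A f) := by
    have h1 := congrArg (fun T => T f) hMinv₂
    rw [mul_smul, ← ContinuousLinearMap.one_def, one_sub_exp_neg_two_smul] at h1
    simpa [A, mul_smul] using h1.symm
  have key := inner_le_inv_mul_norm_sq_of_mul_norm_sq_le_inner (by positivity) (hC (A f))
  rwa [← hf, ← hR] at key

/-- Operator inequality `2τ L e^{-τL} (1 - e^{-2τL})⁻¹ ≤ R_{W,τ} Id` for a self-adjoint
operator with spectrum in `[1/√P_W, ∞)`. -/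
theorem stmt3
    {H : Type*} [NormedAddCommGroup H] [InnerProductSpace ℝ H] [CompleteSpace H]
    (L : H →L[ℝ] H) (hsa : IsSelfAdjoint L)
    (P_W τ : ℝ) (hPW : 0 < P_W) (hτ : 0 < τ)
    (hspec : spectrum ℝ L ⊆ Set.Ici (1 / Real.sqrt P_W))
    (Minv : H →L[ℝ] H)
    (hMinv₁ : Minv.comp (ContinuousLinearMap.id ℝ H - NormedSpace.exp (-((2 * τ) • L)))
      = ContinuousLinearMap.id ℝ H)
    (hMinv₂ : (ContinuousLinearMap.id ℝ H - NormedSpace.exp (-((2 * τ) • L))).comp Minv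
      = ContinuousLinearMap.id ℝ H) :
    let R : ℝ := 2 * τ * Real.exp (-(τ / Real.sqrt P_W)) /
      (Real.sqrt P_W * (1 - Real.exp (-(2 * τ / Real.sqrt P_W))))
    (R ∈ Set.Ioo (0:ℝ) 1) ∧
    ∀ f : H, ⟪f, ((2 * τ) • (L.comp ((NormedSpace.exp (-(τ • L))).comp Minv))) f⟫
      ≤ R * ‖f‖ ^ 2 :=
  stmt3_general L hsa P_W τ hPW hτ hspec Minv hMinv₂
end

section
/- Almost-orthogonality of forward and backward semigroup modes: let L be self-adjoint with spectrum in [1/√P_W, ∞) on L²(μ_W), and let g_+, g_- ∈ L²(μ_W). Define u(t) = e^{-tL}g_+ + e^{-(τ-t)L}g_- for t ∈ [0,τ]. Then ∫₀^τ ‖u(t)‖² U_τ(dt) ≥ (1 - R_{W,τ}) ( ∫₀^τ ‖e^{-tL}g_+‖² U_τ(dt) + ∫₀^τ ‖e^{-(τ-t)L}g_-‖² U_τ(dt) ), where R_{W,τ} = 2τ e^{-τ/√P_W}/(√P_W(1-e^{-2τ/√P_W})). -/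
/-!
Write `E t = exp (-t L)` and `m = 1 / √P_W`, so that `R = τ m / sinh (m τ)`. Since `E` is a
self-adjoint semigroup, the cross term `⟪E t g₊, E (τ - t) g₋⟫ = ⟪E (τ/2) g₊, E (τ/2) g₋⟫` does not
depend on `t`, and it suffices to show `‖E (τ/2) g‖² sinh (m τ) ≤ m ∫₀^τ ‖E t g‖²`. For
`φ t = ‖E t g‖²`, the spectral gap makes `e^{2 m t} φ t` antitone, and Cauchy–Schwarz gives
`φ (τ/2)² ≤ φ t φ (τ - t)`; together these give `φ t + φ (τ - t) ≥ 2 cosh (m (τ - 2 t)) φ (τ/2)`,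
which integrates to the bound.
-/

open MeasureTheory Real intervalIntegral
open scoped RealInnerProductSpace

theorem add_inv_mul_le_add {b c x z : ℝ} (hb : 1 ≤ b) (hc : 0 ≤ c) (hz : 0 ≤ z)
    (hx : b * c ≤ x) (hxz : c ^ 2 ≤ x * z) : (b + b⁻¹) * c ≤ x + z := by
  have hb0 : 0 < b := by linarith
  have hbc : b * (b + b⁻¹) * c = b ^ 2 * c + c := by field_simp
  refine le_of_mul_le_mul_left ?_ hb0
  rw [← mul_assoc, hbc]
  rcases (show 0 ≤ x by nlinarith).eq_or_lt with rfl | hx0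
  · obtain rfl : c = 0 := by nlinarith
    simpa using mul_nonneg hb0.le hz
  · refine le_of_mul_le_mul_left ?_ hx0
    -- after clearing denominators this is `(x - b c) (b x - c) ≥ 0`
    nlinarith [mul_nonneg (sub_nonneg.2 hx) (sub_nonneg.2 (show c ≤ b * x by nlinarith))]

theorem integral_mul_cosh_mul_sub_two_mul (m τ : ℝ) :
    ∫ t in (0 : ℝ)..τ, m * cosh (m * (τ - 2 * t)) = sinh (m * τ) := by
  have hderiv (t : ℝ) :
      HasDerivAt (fun t => -sinh (m * (τ - 2 * t)) / 2) (m * cosh (m * (τ - 2 * t))) t := by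
    refine ((((hasDerivAt_id t).const_mul 2).const_sub τ).const_mul m).sinh.neg.div_const 2
      |>.congr_deriv ?_
    simp only [id]
    ring
  rw [integral_eq_sub_of_hasDerivAt (fun t _ => hderiv t)
      (Continuous.intervalIntegrable (by fun_prop) _ _),
    show m * (τ - 2 * τ) = -(m * τ) by ring, sinh_neg, mul_zero, sub_zero]
  ring

theorem two_mul_mul_exp_neg_div_eq_div_mul_sinh (τ s : ℝ) :
    2 * τ * Real.exp (-(τ / s)) / (s * (1 - Real.exp (-(2 * τ / s))))
      = τ / (s * sinh (τ / s)) := by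
  have hsinh : sinh (τ / s) = (1 - Real.exp (-(2 * τ / s))) / (2 * Real.exp (-(τ / s))) := by
    have h : Real.exp (τ / s) * Real.exp (-(τ / s)) = 1 := by
      rw [← Real.exp_add, add_neg_cancel, exp_zero]
    have h2 : Real.exp (-(2 * τ / s)) = Real.exp (-(τ / s)) ^ 2 := by
      rw [← Real.exp_nat_mul]
      ring_nf
    rw [eq_div_iff (by positivity), sinh_eq, h2]
    linear_combination h
  rw [hsinh, mul_div_assoc', div_div_eq_mul_div]
  ring

theorem intervalIntegral.integral_comp_sub_left_eq_self {E : Type*} [NormedAddCommGroup E]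
    [NormedSpace ℝ E] (f : ℝ → E) (τ : ℝ) :
    ∫ t in (0 : ℝ)..τ, f (τ - t) = ∫ t in (0 : ℝ)..τ, f t := by
  simp [integral_comp_sub_left f τ (a := 0) (b := τ)]

section BanachAlgebra
variable {𝔸 : Type*} [NormedRing 𝔸] [NormedAlgebra ℝ 𝔸]

theorem IsSelfAdjoint.exp_neg_smul [StarRing 𝔸] [StarModule ℝ 𝔸] [ContinuousStar 𝔸] {a : 𝔸}
    (ha : IsSelfAdjoint a) (t : ℝ) : IsSelfAdjoint (NormedSpace.exp (-(t • a))) :=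
  ((IsSelfAdjoint.all t).smul ha).neg.exp

theorem NormedSpace.exp_neg_add_smul [CompleteSpace 𝔸] (a : 𝔸) (s t : ℝ) :
    NormedSpace.exp (-((s + t) • a))
      = NormedSpace.exp (-(s • a)) * NormedSpace.exp (-(t • a)) := by
  have hball (b : 𝔸) : b ∈ Metric.eball 0 (NormedSpace.expSeries ℝ 𝔸).radius :=
    (NormedSpace.expSeries_radius_eq_top ℝ 𝔸).symm ▸ edist_lt_top _ _
  rw [add_smul, neg_add]
  exact NormedSpace.exp_add_of_commute_of_mem_ball
    (((Commute.refl a).smul_left s).smul_right t).neg_left.neg_right (hball _) (hball _)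

end BanachAlgebra

section HilbertSpace
variable {H : Type*} [NormedAddCommGroup H] [InnerProductSpace ℝ H] [CompleteSpace H]
  {L : H →L[ℝ] H}

theorem IsSelfAdjoint.mul_norm_sq_le_inner_map_self (hL : IsSelfAdjoint L) {m : ℝ}
    (hspec : spectrum ℝ L ⊆ Set.Ici m) (x : H) : m * ‖x‖ ^ 2 ≤ ⟪L x, x⟫ := by
  rcases subsingleton_or_nontrivial H with hH | hH
  · simp [Subsingleton.elim x 0]
  set c := ‖L‖ + |m|
  set S := algebraMap ℝ (H →L[ℝ] H) c - L
  -- `S` is self-adjoint with spectrum `c - σ(L) ⊆ [0, c - m]`, and its norm is its spectral radius.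
  have hnorm : ‖S‖ ≤ c - m := by
    have hρ := ContinuousLinearMap.spectralRadius_eq_nnnorm S
      ((IsSelfAdjoint.algebraMap _ (IsSelfAdjoint.all c)).sub hL)
    have hρle : spectralRadius ℝ S ≤ ENNReal.ofReal (c - m) := by
      refine iSup₂_le fun k hk => ?_
      rw [← spectrum.singleton_sub_eq] at hk
      obtain ⟨_, rfl, l, hl, rfl⟩ := hk
      have hlL := spectrum.norm_le_norm_of_mem hl
      have hml : m ≤ l := hspec hl
      rw [← enorm_eq_nnnorm, ← ofReal_norm]
      refine ENNReal.ofReal_le_ofReal ?_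
      rw [Real.norm_eq_abs, abs_le] at hlL ⊢
      constructor <;> linarith [le_abs_self m, neg_abs_le m]
    rw [hρ, ← enorm_eq_nnnorm, ← ofReal_norm] at hρle
    exact (ENNReal.ofReal_le_ofReal_iff (by linarith [norm_nonneg L, le_abs_self m])).1 hρle
  have hSle : ⟪S x, x⟫ ≤ (c - m) * ‖x‖ ^ 2 :=
    calc ⟪S x, x⟫ ≤ ‖S x‖ * ‖x‖ := real_inner_le_norm _ _
      _ ≤ ‖S‖ * ‖x‖ * ‖x‖ := by gcongr; exact S.le_opNorm x
      _ ≤ (c - m) * ‖x‖ * ‖x‖ := by gcongr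
      _ = (c - m) * ‖x‖ ^ 2 := by ring
  have hSeq : ⟪S x, x⟫ = c * ‖x‖ ^ 2 - ⟪L x, x⟫ := by
    simp [S, Algebra.algebraMap_eq_smul_one, inner_sub_left, real_inner_smul_left]
  linarith

variable (L) in
theorem hasDerivAt_exp_neg_smul_apply (g : H) (t : ℝ) :
    HasDerivAt (fun s : ℝ => NormedSpace.exp (-(s • L)) g)
      (-L (NormedSpace.exp (-(t • L)) g)) t := by
  simpa [smul_neg] using
    (hasDerivAt_exp_smul_const' (𝕂 := ℝ) (-L) t).clm_apply (hasDerivAt_const t g)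

@[fun_prop]
theorem Continuous.exp_neg_smul_apply {X : Type*} [TopologicalSpace X] {f : X → ℝ}
    (hf : Continuous f) (L : H →L[ℝ] H) (g : H) :
    Continuous fun x => NormedSpace.exp (-(f x • L)) g :=
  (continuous_iff_continuousAt.2 fun t =>
    (hasDerivAt_exp_neg_smul_apply L g t).continuousAt).comp hf

theorem IsSelfAdjoint.inner_exp_neg_smul_apply (hL : IsSelfAdjoint L) (s t : ℝ) (x y : H) :
    ⟪NormedSpace.exp (-(s • L)) x, NormedSpace.exp (-(t • L)) y⟫
      = ⟪x, NormedSpace.exp (-((s + t) • L)) y⟫ := by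
  rw [(hL.exp_neg_smul s).isSymmetric.apply_clm]
  exact congrArg (fun T : H →L[ℝ] H => ⟪x, T y⟫) (NormedSpace.exp_neg_add_smul L s t).symm

theorem IsSelfAdjoint.exp_mul_norm_sq_exp_neg_smul_apply_le (hL : IsSelfAdjoint L) {m : ℝ}
    (hspec : spectrum ℝ L ⊆ Set.Ici m) (g : H) {s t : ℝ} (hst : s ≤ t) :
    Real.exp (2 * m * (t - s)) * ‖NormedSpace.exp (-(t • L)) g‖ ^ 2
      ≤ ‖NormedSpace.exp (-(s • L)) g‖ ^ 2 := by
  have hderiv (t : ℝ) : HasDerivAt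
      (fun t : ℝ => Real.exp (2 * m * t) * ‖NormedSpace.exp (-(t • L)) g‖ ^ 2)
      (2 * Real.exp (2 * m * t) * (m * ‖NormedSpace.exp (-(t • L)) g‖ ^ 2
        - ⟪L (NormedSpace.exp (-(t • L)) g), NormedSpace.exp (-(t • L)) g⟫)) t := by
    refine (((hasDerivAt_id t).const_mul (2 * m)).exp.fun_mul
      (hasDerivAt_exp_neg_smul_apply L g t).norm_sq).congr_deriv ?_
    rw [inner_neg_right, real_inner_comm, id]
    ring
  have hanti : Antitone fun t : ℝ =>
      Real.exp (2 * m * t) * ‖NormedSpace.exp (-(t • L)) g‖ ^ 2 := by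
    refine antitone_of_deriv_nonpos (fun t => (hderiv t).differentiableAt) fun t => ?_
    rw [(hderiv t).deriv]
    have hcoer := hL.mul_norm_sq_le_inner_map_self hspec (NormedSpace.exp (-(t • L)) g)
    exact mul_nonpos_of_nonneg_of_nonpos (by positivity) (by linarith)
  have h := hanti hst
  rw [mul_sub, Real.exp_sub, div_mul_eq_mul_div, div_le_iff₀ (Real.exp_pos _)]
  linarith

theorem IsSelfAdjoint.norm_sq_exp_neg_half_smul_apply_le (hL : IsSelfAdjoint L) (τ t : ℝ)
    (g : H) :
    ‖NormedSpace.exp (-((τ / 2) • L)) g‖ ^ 2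
      ≤ ‖NormedSpace.exp (-(t • L)) g‖ * ‖NormedSpace.exp (-((τ - t) • L)) g‖ :=
  calc ‖NormedSpace.exp (-((τ / 2) • L)) g‖ ^ 2
      = ⟪NormedSpace.exp (-((τ / 2) • L)) g, NormedSpace.exp (-((τ / 2) • L)) g⟫ :=
        (real_inner_self_eq_norm_sq _).symm
    _ = ⟪NormedSpace.exp (-(t • L)) g, NormedSpace.exp (-((τ - t) • L)) g⟫ := by
        rw [hL.inner_exp_neg_smul_apply, hL.inner_exp_neg_smul_apply, add_halves, add_sub_cancel]
    _ ≤ _ := real_inner_le_norm _ _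

theorem IsSelfAdjoint.two_mul_cosh_mul_norm_sq_le (hL : IsSelfAdjoint L) {m : ℝ}
    (hspec : spectrum ℝ L ⊆ Set.Ici m) (hm : 0 ≤ m) (g : H) (τ t : ℝ) :
    2 * cosh (m * (τ - 2 * t)) * ‖NormedSpace.exp (-((τ / 2) • L)) g‖ ^ 2
      ≤ ‖NormedSpace.exp (-(t • L)) g‖ ^ 2 + ‖NormedSpace.exp (-((τ - t) • L)) g‖ ^ 2 := by
  wlog ht : t ≤ τ / 2 generalizing t
  · have h := this (τ - t) (by linarith)
    rwa [sub_sub_cancel, add_comm, show m * (τ - 2 * (τ - t)) = -(m * (τ - 2 * t)) by ring,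
      cosh_neg] at h
  have hdecay := hL.exp_mul_norm_sq_exp_neg_smul_apply_le hspec g ht
  have hlogconv := hL.norm_sq_exp_neg_half_smul_apply_le τ t g
  rw [show 2 * m * (τ / 2 - t) = m * (τ - 2 * t) by ring] at hdecay
  rw [cosh_eq, mul_div_cancel₀ _ two_ne_zero, Real.exp_neg]
  refine add_inv_mul_le_add (one_le_exp (by nlinarith)) (by positivity) (by positivity) hdecay ?_
  calc _ ≤ (‖NormedSpace.exp (-(t • L)) g‖ * ‖NormedSpace.exp (-((τ - t) • L)) g‖) ^ 2 := by
        gcongr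
    _ = _ := mul_pow _ _ _

theorem IsSelfAdjoint.norm_sq_exp_neg_half_smul_apply_mul_sinh_le (hL : IsSelfAdjoint L)
    {m : ℝ} (hspec : spectrum ℝ L ⊆ Set.Ici m) (hm : 0 ≤ m) {τ : ℝ} (hτ : 0 ≤ τ) (g : H) :
    ‖NormedSpace.exp (-((τ / 2) • L)) g‖ ^ 2 * sinh (m * τ)
      ≤ m * ∫ t in (0 : ℝ)..τ, ‖NormedSpace.exp (-(t • L)) g‖ ^ 2 := by
  set c := ‖NormedSpace.exp (-((τ / 2) • L)) g‖ ^ 2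
  have hmono : ∫ t in (0 : ℝ)..τ, m * cosh (m * (τ - 2 * t)) * (2 * c)
      ≤ ∫ t in (0 : ℝ)..τ, m * (‖NormedSpace.exp (-(t • L)) g‖ ^ 2
        + ‖NormedSpace.exp (-((τ - t) • L)) g‖ ^ 2) := by
    refine integral_mono_on hτ (Continuous.intervalIntegrable (by fun_prop) _ _)
      (Continuous.intervalIntegrable (by fun_prop) _ _) fun t _ => ?_
    have h := mul_le_mul_of_nonneg_left (hL.two_mul_cosh_mul_norm_sq_le hspec hm g τ t) hm
    linarith
  rw [intervalIntegral.integral_mul_const, integral_mul_cosh_mul_sub_two_mul,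
    intervalIntegral.integral_const_mul,
    intervalIntegral.integral_add (Continuous.intervalIntegrable (by fun_prop) _ _)
      (Continuous.intervalIntegrable (by fun_prop) _ _),
    integral_comp_sub_left_eq_self (fun t => ‖NormedSpace.exp (-(t • L)) g‖ ^ 2)] at hmono
  linarith

theorem IsSelfAdjoint.integral_norm_sq_exp_neg_smul_apply_add (hL : IsSelfAdjoint L) (τ : ℝ)
    (x y : H) :
    ∫ t in (0 : ℝ)..τ, ‖NormedSpace.exp (-(t • L)) x + NormedSpace.exp (-((τ - t) • L)) y‖ ^ 2
      = (∫ t in (0 : ℝ)..τ, ‖NormedSpace.exp (-(t • L)) x‖ ^ 2)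
        + (∫ t in (0 : ℝ)..τ, ‖NormedSpace.exp (-((τ - t) • L)) y‖ ^ 2)
        + 2 * τ * ⟪x, NormedSpace.exp (-(τ • L)) y⟫ := by
  have hexpand (t : ℝ) :
      ‖NormedSpace.exp (-(t • L)) x + NormedSpace.exp (-((τ - t) • L)) y‖ ^ 2
        = ‖NormedSpace.exp (-(t • L)) x‖ ^ 2 + ‖NormedSpace.exp (-((τ - t) • L)) y‖ ^ 2
          + 2 * ⟪x, NormedSpace.exp (-(τ • L)) y⟫ := by
    rw [norm_add_sq_real, hL.inner_exp_neg_smul_apply, add_sub_cancel]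
    ring
  simp_rw [hexpand]
  rw [intervalIntegral.integral_add (Continuous.intervalIntegrable (by fun_prop) _ _)
      intervalIntegrable_const,
    intervalIntegral.integral_add (Continuous.intervalIntegrable (by fun_prop) _ _)
      (Continuous.intervalIntegrable (by fun_prop) _ _),
    intervalIntegral.integral_const, smul_eq_mul, sub_zero]
  ring

theorem IsSelfAdjoint.one_sub_mul_le_integral_norm_sq_exp_neg_smul_apply_add
    (hL : IsSelfAdjoint L) {m : ℝ} (hspec : spectrum ℝ L ⊆ Set.Ici m) (hm : 0 < m) {τ : ℝ}
    (hτ : 0 < τ) (x y : H) :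
    (1 - τ * m / sinh (m * τ)) * ((∫ t in (0 : ℝ)..τ, ‖NormedSpace.exp (-(t • L)) x‖ ^ 2)
        + ∫ t in (0 : ℝ)..τ, ‖NormedSpace.exp (-((τ - t) • L)) y‖ ^ 2)
      ≤ ∫ t in (0 : ℝ)..τ,
          ‖NormedSpace.exp (-(t • L)) x + NormedSpace.exp (-((τ - t) • L)) y‖ ^ 2 := by
  have hK : |⟪x, NormedSpace.exp (-(τ • L)) y⟫|
      ≤ ‖NormedSpace.exp (-((τ / 2) • L)) x‖ * ‖NormedSpace.exp (-((τ / 2) • L)) y‖ := by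
    rw [← add_halves τ, ← hL.inner_exp_neg_smul_apply, add_halves]
    exact abs_real_inner_le_norm _ _
  have hx := hL.norm_sq_exp_neg_half_smul_apply_mul_sinh_le hspec hm.le hτ.le x
  have hy := hL.norm_sq_exp_neg_half_smul_apply_mul_sinh_le hspec hm.le hτ.le y
  rw [hL.integral_norm_sq_exp_neg_smul_apply_add,
    integral_comp_sub_left_eq_self (fun t => ‖NormedSpace.exp (-(t • L)) y‖ ^ 2)]
  set I := (∫ t in (0 : ℝ)..τ, ‖NormedSpace.exp (-(t • L)) x‖ ^ 2)
    + ∫ t in (0 : ℝ)..τ, ‖NormedSpace.exp (-(t • L)) y‖ ^ 2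
  set K := ⟪x, NormedSpace.exp (-(τ • L)) y⟫
  have hinner : 2 * |K| * sinh (m * τ) ≤ m * I := by
    nlinarith [sinh_pos_iff.2 (mul_pos hm hτ),
      two_mul_le_add_sq ‖NormedSpace.exp (-((τ / 2) • L)) x‖ ‖NormedSpace.exp (-((τ / 2) • L)) y‖]
  have hcross : 2 * τ * |K| ≤ τ * m / sinh (m * τ) * I := by
    rw [div_mul_eq_mul_div, le_div_iff₀ (sinh_pos_iff.2 (mul_pos hm hτ))]
    nlinarith
  nlinarith [neg_abs_le K]

end HilbertSpace

/-- Almost-orthogonality of forward and backward semigroup modes. -/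
theorem stmt5
    {H : Type*} [NormedAddCommGroup H] [InnerProductSpace ℝ H] [CompleteSpace H]
    (L : H →L[ℝ] H) (hsa : IsSelfAdjoint L)
    (P_W τ : ℝ) (hPW : 0 < P_W) (hτ : 0 < τ)
    (hspec : spectrum ℝ L ⊆ Set.Ici (1 / Real.sqrt P_W))
    (gp gm : H) :
    let E : ℝ → H →L[ℝ] H := fun t => NormedSpace.exp (-(t • L))
    let R : ℝ := 2 * τ * Real.exp (-(τ / Real.sqrt P_W)) /
      (Real.sqrt P_W * (1 - Real.exp (-(2 * τ / Real.sqrt P_W))))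
    (1 - R) * ((τ⁻¹ * ∫ t in (0:ℝ)..τ, ‖E t gp‖ ^ 2)
        + (τ⁻¹ * ∫ t in (0:ℝ)..τ, ‖E (τ - t) gm‖ ^ 2))
      ≤ τ⁻¹ * ∫ t in (0:ℝ)..τ, ‖E t gp + E (τ - t) gm‖ ^ 2 := by
  intro E R
  have hR : R = τ * (1 / √P_W) / sinh (1 / √P_W * τ) :=
    (two_mul_mul_exp_neg_div_eq_div_mul_sinh τ √P_W).trans
      (by rw [one_div_mul_eq_div, mul_one_div, div_div])
  have h := hsa.one_sub_mul_le_integral_norm_sq_exp_neg_smul_apply_add hspec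
    (by positivity) hτ gp gm
  rw [← hR] at h
  calc (1 - R) * ((τ⁻¹ * ∫ t in (0:ℝ)..τ, ‖E t gp‖ ^ 2)
        + (τ⁻¹ * ∫ t in (0:ℝ)..τ, ‖E (τ - t) gm‖ ^ 2))
      = τ⁻¹ * ((1 - R) * ((∫ t in (0:ℝ)..τ, ‖E t gp‖ ^ 2)
        + ∫ t in (0:ℝ)..τ, ‖E (τ - t) gm‖ ^ 2)) := by ring
    _ ≤ τ⁻¹ * ∫ t in (0:ℝ)..τ, ‖E t gp + E (τ - t) gm‖ ^ 2 := by gcongr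
end

section
/- Chaining of weak Poincaré conjugates: let β₁, β₂ be decreasing functions on (0,∞) tending to 0, with associated K-transforms K_i(u) = u β_i(1/u) and conjugates K_i*. Define β(s) = inf{s₁ β₂(s₂) + β₁(s₁) : s₁, s₂ > 0, s₁ s₂ = s}. Then the convex conjugate K* of K(u) = u β(1/u) satisfies K* = K₂* ∘ K₁*. -/
open Real Set Filter

/-!
Write `C(β, w) = {u w - u β(1/u) : u ≥ 0}`, so that `K*(w) = sup C(β, w)`. Substituting
`u = 1/s`, a number `K` bounds `C(β, w)` from above iff `K ≥ 0` and `w - β s ≤ s K` for all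
`s > 0`. In this form both inequalities of `K* = K₂* ∘ K₁*` are two-line chains: with
`W = K₁*(w)`, `V = K₂*(W)` and `s = s₁ s₂`,
`w - β₁ s₁ ≤ s₁ W ≤ s₁ (β₂ s₂ + s₂ V)` bounds `w - β s ≤ s V`, and conversely an upper bound
`b` of `C(β, w)` gives `w - β₁ s₁ ≤ s₁ (β₂ s₂ + s₂ b)`, hence `W ≤ β₂ s₂ + s₂ b`, i.e. `b`
bounds `C(β₂, W)`; that bound is nonnegative because `β₂` decreases to `0`.
-/

lemma AntitoneOn.le_of_tendsto_atTop {α β : Type*} [LinearOrder α] [Nonempty α] [Preorder β]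
    [TopologicalSpace β] [OrderClosedTopology β] {f : α → β} {a x : α} {l : β}
    (hf : AntitoneOn f (Ioi a)) (hlim : Tendsto f atTop (nhds l)) (hx : a < x) : l ≤ f x :=
  le_of_tendsto hlim <| (eventually_ge_atTop x).mono fun _ ht => hf hx (hx.trans_le ht) ht

def conjugateSet (β : ℝ → ℝ) (w : ℝ) : Set ℝ := {x | ∃ u ≥ (0:ℝ), x = u * w - u * β u⁻¹}

def chainedSet (β₁ β₂ : ℝ → ℝ) (s : ℝ) : Set ℝ :=
  {x | ∃ s₁ > (0:ℝ), ∃ s₂ > (0:ℝ), s₁ * s₂ = s ∧ x = s₁ * β₂ s₂ + β₁ s₁}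

lemma mem_upperBounds_conjugateSet_iff {β : ℝ → ℝ} {w K : ℝ} :
    K ∈ upperBounds (conjugateSet β w) ↔ 0 ≤ K ∧ ∀ s > 0, w - β s ≤ s * K := by
  constructor
  · intro hK
    refine ⟨hK ⟨0, le_rfl, by ring⟩, fun s hs => ?_⟩
    have h := hK ⟨s⁻¹, (inv_pos.2 hs).le, rfl⟩
    rwa [inv_inv, ← mul_sub, inv_mul_le_iff₀ hs] at h
  · rintro ⟨hK0, hK⟩ x ⟨u, hu, rfl⟩
    rcases hu.eq_or_lt with rfl | hu
    · simpa using hK0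
    · rw [← mul_sub]
      exact (le_inv_mul_iff₀ hu).1 (hK u⁻¹ (inv_pos.2 hu))

lemma mem_upperBounds_conjugateSet_of_chainedSet {β₁ β₂ β : ℝ → ℝ} {w W V : ℝ}
    (hβ : ∀ s > 0, IsGLB (chainedSet β₁ β₂ s) (β s))
    (hW : W ∈ upperBounds (conjugateSet β₁ w)) (hV : V ∈ upperBounds (conjugateSet β₂ W)) :
    V ∈ upperBounds (conjugateSet β w) := by
  rw [mem_upperBounds_conjugateSet_iff] at hW hV ⊢
  refine ⟨hV.1, fun s hs => sub_le_comm.1 <| (hβ s hs).2 ?_⟩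
  rintro _ ⟨s₁, hs₁, s₂, hs₂, rfl, rfl⟩
  have h₁ := hW.2 s₁ hs₁
  have h₂ := mul_le_mul_of_nonneg_left (hV.2 s₂ hs₂) hs₁.le
  linear_combination h₁ + h₂

lemma upperBounds_conjugateSet_subset_of_chainedSet {β₁ β₂ β : ℝ → ℝ} {w W : ℝ}
    (hβ₂ : ∀ s > 0, 0 ≤ β₂ s) (hβ : ∀ s > 0, β s ∈ lowerBounds (chainedSet β₁ β₂ s))
    (hW : IsLUB (conjugateSet β₁ w) W) :
    upperBounds (conjugateSet β w) ⊆ upperBounds (conjugateSet β₂ W) := by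
  intro b hb
  rw [mem_upperBounds_conjugateSet_iff] at hb ⊢
  refine ⟨hb.1, fun t ht => sub_le_iff_le_add'.2 <| hW.2 ?_⟩
  rw [mem_upperBounds_conjugateSet_iff]
  refine ⟨add_nonneg (hβ₂ t ht) (mul_nonneg ht.le hb.1), fun s hs => ?_⟩
  have hst := hβ (s * t) (mul_pos hs ht) ⟨s, hs, t, ht, rfl, rfl⟩
  linear_combination hst + hb.2 (s * t) (mul_pos hs ht)

theorem stmt14_general
    (β₁ β₂ β : ℝ → ℝ)
    (hβ₂_anti : AntitoneOn β₂ (Set.Ioi 0))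
    (hβ₂_lim : Tendsto β₂ atTop (nhds 0))
    (hβ : ∀ s > (0:ℝ), IsGLB
      {x | ∃ s₁ > (0:ℝ), ∃ s₂ > (0:ℝ), s₁ * s₂ = s ∧ x = s₁ * β₂ s₂ + β₁ s₁} (β s))
    (K1s K2s Ks : ℝ → ℝ)
    (hK1 : ∀ w ≥ (0:ℝ), IsLUB {x | ∃ u ≥ (0:ℝ), x = u * w - u * β₁ u⁻¹} (K1s w))
    (hK2 : ∀ w ≥ (0:ℝ), IsLUB {x | ∃ u ≥ (0:ℝ), x = u * w - u * β₂ u⁻¹} (K2s w))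
    (hKs : ∀ w ≥ (0:ℝ), IsLUB {x | ∃ u ≥ (0:ℝ), x = u * w - u * β u⁻¹} (Ks w)) :
    ∀ w ≥ (0:ℝ), Ks w = K2s (K1s w) := by
  intro w hw
  have hβ₂_nonneg : ∀ s > 0, 0 ≤ β₂ s := fun s hs => hβ₂_anti.le_of_tendsto_atTop hβ₂_lim hs
  have hW : IsLUB (conjugateSet β₁ w) (K1s w) := hK1 w hw
  have hW₀ : 0 ≤ K1s w := (mem_upperBounds_conjugateSet_iff.1 hW.1).1
  have hV : IsLUB (conjugateSet β₂ (K1s w)) (K2s (K1s w)) := hK2 _ hW₀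
  refine (hKs w hw).unique ⟨mem_upperBounds_conjugateSet_of_chainedSet hβ hW.1 hV.1, ?_⟩
  exact fun b hb => hV.2 <|
    upperBounds_conjugateSet_subset_of_chainedSet hβ₂_nonneg (fun s hs => (hβ s hs).1) hW hb

/-- Chaining of weak Poincaré conjugates: the conjugate of the chained `β` is the
composition `K₂* ∘ K₁*`. -/
theorem stmt14
    (β₁ β₂ β : ℝ → ℝ)
    (hβ₁_anti : AntitoneOn β₁ (Set.Ioi 0)) (hβ₂_anti : AntitoneOn β₂ (Set.Ioi 0))
    (hβ₁_lim : Tendsto β₁ atTop (nhds 0)) (hβ₂_lim : Tendsto β₂ atTop (nhds 0))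
    (hβ : ∀ s > (0:ℝ), IsGLB
      {x | ∃ s₁ > (0:ℝ), ∃ s₂ > (0:ℝ), s₁ * s₂ = s ∧ x = s₁ * β₂ s₂ + β₁ s₁} (β s))
    (K1s K2s Ks : ℝ → ℝ)
    (hK1 : ∀ w ≥ (0:ℝ), IsLUB {x | ∃ u ≥ (0:ℝ), x = u * w - u * β₁ u⁻¹} (K1s w))
    (hK2 : ∀ w ≥ (0:ℝ), IsLUB {x | ∃ u ≥ (0:ℝ), x = u * w - u * β₂ u⁻¹} (K2s w))
    (hKs : ∀ w ≥ (0:ℝ), IsLUB {x | ∃ u ≥ (0:ℝ), x = u * w - u * β u⁻¹} (Ks w)) :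
    ∀ w ≥ (0:ℝ), Ks w = K2s (K1s w) :=
  stmt14_general β₁ β₂ β hβ₂_anti hβ₂_lim hβ K1s K2s Ks hK1 hK2 hKs
end

section
/- Decay rate from polynomial β: if β(s) = η₀ s^{-η₁} with η₀, η₁ > 0, then K*(w) = (η₀η₁ / (η₀(1+η₁))^{1+1/η₁}) w^{1+1/η₁}, and the resulting decay function satisfies F_a^{-1}(t) ≤ η₀ (1+η₁)^{1+η₁} t^{-η₁}. -/
open Real Set intervalIntegral

/-!
For Hölder conjugate `p, q`, Young's inequality `u x ≤ u ^ p / p + x ^ q / q` with `x = w / (c p)`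
gives `u w - c u ^ p ≤ c (p - 1) x ^ q`, with equality at `u = x ^ (q - 1)`; for `p = 1 + η₁` this
is the stated `K*`. As `K*(w) = C w ^ q` with `q > 1`, `F_a(z) ≤ z ^ (1 - q) / (C (q - 1))`, and
choosing `z` to make the right side equal to `t` gives `F_a(z) ≤ t`, hence `F_a⁻¹(t) ≤ z` by
antitonicity (trivially so when `z ≥ a`, since `F_a⁻¹` takes values below `a`).
-/

namespace Real

theorem holderConjugate_one_add {η : ℝ} (h : 0 < η) : (1 + η).HolderConjugate (1 + 1 / η) := by
  rw [holderConjugate_iff]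
  refine ⟨by linarith, ?_⟩
  field_simp
  ring

variable {c p q w : ℝ}

theorem mul_sub_mul_rpow_le (hc : 0 < c) (hpq : p.HolderConjugate q) {u : ℝ} (hu : 0 ≤ u)
    (hw : 0 ≤ w) : u * w - c * u ^ p ≤ c * (p - 1) * (w / (c * p)) ^ q := by
  have hcp : 0 < c * p := mul_pos hc hpq.pos
  have young := young_inequality_of_nonneg hu (div_nonneg hw hcp.le) hpq
  have hp_div_q : p / q = p - 1 := hpq.div_conj_eq_sub_one
  have hp0 : p ≠ 0 := hpq.ne_zero
  have hc0 : c ≠ 0 := hc.ne'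
  calc u * w - c * u ^ p = c * p * (u * (w / (c * p))) - c * u ^ p := by field_simp
    _ ≤ c * p * (u ^ p / p + (w / (c * p)) ^ q / q) - c * u ^ p := by gcongr
    _ = c * (p / q) * (w / (c * p)) ^ q := by field_simp; ring
    _ = c * (p - 1) * (w / (c * p)) ^ q := by rw [hp_div_q]

theorem isLUB_mul_sub_mul_rpow (hc : 0 < c) (hpq : p.HolderConjugate q) (hw : 0 ≤ w) :
    IsLUB {x | ∃ u ≥ 0, x = u * w - c * u ^ p} (c * (p - 1) * (w / (c * p)) ^ q) := by
  refine ⟨fun x ⟨u, hu, hx⟩ => hx ▸ mul_sub_mul_rpow_le hc hpq hu hw, fun b hb => hb ?_⟩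
  have hcp : 0 < c * p := mul_pos hc hpq.pos
  set x := w / (c * p) with hx
  have hx0 : 0 ≤ x := div_nonneg hw hcp.le
  refine ⟨x ^ (q - 1), rpow_nonneg hx0 _, ?_⟩
  have hpow : (x ^ (q - 1)) ^ p = x ^ q := by
    rw [← rpow_mul hx0, hpq.symm.sub_one_mul_conj]
  have hw_eq : w = c * p * x := by rw [hx]; field_simp [hpq.ne_zero]
  have hmul : x ^ (q - 1) * w = c * p * x ^ q := by
    rw [hw_eq, mul_left_comm, ← rpow_add_one' hx0 (by linarith [hpq.symm.sub_one_pos]),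
      sub_add_cancel]
  rw [hpow, hmul]
  ring

theorem integral_inv_mul_rpow (C : ℝ) (hq : q ≠ 1) {z a : ℝ} (hz : 0 < z) (ha : 0 < a) :
    ∫ w in z..a, (C * w ^ q)⁻¹ = (z ^ (1 - q) - a ^ (1 - q)) / (C * (q - 1)) := by
  have hpos : ∀ w ∈ uIcc z a, 0 < w := fun w hw => (lt_min hz ha).trans_le hw.1
  have hcongr : EqOn (fun w => (C * w ^ q)⁻¹) (fun w => C⁻¹ * w ^ (-q)) (uIcc z a) :=
    fun w hw => by simp only [mul_inv, rpow_neg (hpos w hw).le]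
  rw [integral_congr hcongr, integral_const_mul, integral_rpow
    (Or.inr ⟨by contrapose! hq; linarith, fun h0 => (hpos 0 h0).false⟩), neg_add_eq_sub,
    ← neg_sub q 1]
  simp only [div_eq_mul_inv, mul_inv, inv_neg]
  ring

theorem le_rpow_of_antitoneOn_integral_inv_mul_rpow {F : ℝ → ℝ} {C q a t : ℝ} (hC : 0 < C)
    (hq : 1 < q) (hF : AntitoneOn F (Ioi 0))
    (hFI : ∀ z ∈ Ioo 0 a, F (∫ w in z..a, (C * w ^ q)⁻¹) = z) (hFa : F t < a) (ht : 0 < t) :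
    F t ≤ (C * (q - 1) * t) ^ (-(q - 1)⁻¹) := by
  have hq1 : 0 < q - 1 := sub_pos.mpr hq
  set z := (C * (q - 1) * t) ^ (-(q - 1)⁻¹)
  have hz : 0 < z := by positivity
  rcases lt_or_ge z a with hza | haz
  · have hzq : z ^ (1 - q) = C * (q - 1) * t := by
      rw [← rpow_mul (by positivity), show -(q - 1)⁻¹ * (1 - q) = 1 by field_simp; ring, rpow_one]
    have hlt : a ^ (1 - q) < z ^ (1 - q) := rpow_lt_rpow_of_neg hz hza (by linarith)
    have ha : 0 < a ^ (1 - q) := rpow_pos_of_pos (hz.trans hza) _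
    have hI := integral_inv_mul_rpow C hq.ne' hz (hz.trans hza)
    have hIpos : 0 < ∫ w in z..a, (C * w ^ q)⁻¹ := by
      rw [hI]; exact div_pos (by linarith) (by positivity)
    have hIt : ∫ w in z..a, (C * w ^ q)⁻¹ ≤ t := by
      rw [hI, div_le_iff₀ (by positivity), hzq]; linarith
    calc F t ≤ F (∫ w in z..a, (C * w ^ q)⁻¹) := hF hIpos ht hIt
      _ = z := hFI z ⟨hz, hza⟩
  · exact hFa.le.trans haz

end Real

theorem stmt16_general
    (η₀ η₁ a : ℝ) (h0 : 0 < η₀) (h1 : 0 < η₁)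
    (Finv : ℝ → ℝ)
    (hFinv : ∀ z ∈ Set.Ioo (0:ℝ) a,
      Finv (∫ w in z..a,
        ((η₀ * η₁ / (η₀ * (1 + η₁)) ^ (1 + 1 / η₁)) * w ^ (1 + 1 / η₁))⁻¹) = z)
    (hFinv_range : ∀ t > (0:ℝ), Finv t ∈ Set.Ioo (0:ℝ) a)
    (hFinv_anti : AntitoneOn Finv (Set.Ioi 0)) :
    (∀ w ≥ (0:ℝ), IsLUB {x | ∃ u ≥ (0:ℝ), x = u * w - η₀ * u ^ (1 + η₁)}
      ((η₀ * η₁ / (η₀ * (1 + η₁)) ^ (1 + 1 / η₁)) * w ^ (1 + 1 / η₁))) ∧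
    (∀ t > (0:ℝ), Finv t ≤ η₀ * (1 + η₁) ^ (1 + η₁) * t ^ (-η₁)) := by
  have hp : 0 < 1 + η₁ := by linarith
  refine ⟨fun w hw => ?_, fun t ht => ?_⟩
  · convert isLUB_mul_sub_mul_rpow h0 (holderConjugate_one_add h1) hw using 1
    rw [div_rpow hw (by positivity)]
    ring
  · convert le_rpow_of_antitoneOn_integral_inv_mul_rpow (by positivity)
      (by simp [h1]) hFinv_anti hFinv (hFinv_range t ht).2 ht using 1
    have hK : 0 < η₀ * (1 + η₁) := by positivity
    rw [show 1 + 1 / η₁ - 1 = η₁⁻¹ by ring, inv_inv,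
      show η₀ * η₁ / (η₀ * (1 + η₁)) ^ (1 + 1 / η₁) * η₁⁻¹ = η₀ / (η₀ * (1 + η₁)) ^ (1 + 1 / η₁)
        by field_simp,
      mul_rpow (by positivity) ht.le, div_rpow h0.le (by positivity), ← rpow_mul hK.le,
      show (1 + 1 / η₁) * -η₁ = -(1 + η₁) by field_simp; ring, rpow_neg hK.le,
      mul_rpow h0.le hp.le, rpow_neg h0.le, rpow_add h0, rpow_one]
    field_simp

/-- Decay rate from polynomial `β(s) = η₀ s^{-η₁}`: explicit conjugate
`K*(w) = (η₀η₁/(η₀(1+η₁))^{1+1/η₁}) w^{1+1/η₁}` and algebraic decay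
`F_a⁻¹(t) ≤ η₀ (1+η₁)^{1+η₁} t^{-η₁}`. -/
theorem stmt16
    (η₀ η₁ a : ℝ) (h0 : 0 < η₀) (h1 : 0 < η₁) (ha : a ∈ Set.Ioc (0:ℝ) (1 / 4))
    (Finv : ℝ → ℝ)
    (hFinv : ∀ z ∈ Set.Ioo (0:ℝ) a,
      Finv (∫ w in z..a,
        ((η₀ * η₁ / (η₀ * (1 + η₁)) ^ (1 + 1 / η₁)) * w ^ (1 + 1 / η₁))⁻¹) = z)
    (hFinv_range : ∀ t > (0:ℝ), Finv t ∈ Set.Ioo (0:ℝ) a)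
    (hFinv_anti : AntitoneOn Finv (Set.Ioi 0)) :
    (∀ w ≥ (0:ℝ), IsLUB {x | ∃ u ≥ (0:ℝ), x = u * w - η₀ * u ^ (1 + η₁)}
      ((η₀ * η₁ / (η₀ * (1 + η₁)) ^ (1 + 1 / η₁)) * w ^ (1 + 1 / η₁))) ∧
    (∀ t > (0:ℝ), Finv t ≤ η₀ * (1 + η₁) ^ (1 + η₁) * t ^ (-η₁)) :=
  stmt16_general η₀ η₁ a h0 h1 Finv hFinv hFinv_range hFinv_anti
end

section
/- Decay rate from stretched-exponential β: if β(s) = η₀ exp(-η₁ s^{η₂}) with η₀, η₁, η₂ > 0, then there exists c > 0 such that for all sufficiently small w > 0, K*(w) ≥ c w (log(1/w))^{-1/η₂}, and the resulting decay function satisfies F_a^{-1}(t) ≤ C exp(-C' t^{η₂/(1+η₂)}) for some constants C, C' > 0. -/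
open Real Set intervalIntegral

/-! With `M = max (2 η₀) 1`, the choice `u = (η₁ / log (M / w)) ^ (1 / η₂)` in the
supremum defining `K*(w)` makes the penalty `u β(1/u) = u η₀ w / M` at most `u w / 2`, so
`K*(w) ≥ c w / log (M / w) ^ (1 / η₂)`. As `K*` is monotone, `1 / K*` is integrable, and
`F_a(z) ≤ c⁻¹ ∫_z^a w⁻¹ log (M / w) ^ (1 / η₂) dw ≤ A log (M / z) ^ (1 + 1 / η₂)`.
Evaluating `F_a` at `z = M exp (-(t / A) ^ (η₂ / (1 + η₂)))` and using that `F_a⁻¹` is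
antitone gives `F_a⁻¹(t) ≤ z`. -/

def conjugateValues (K : ℝ → ℝ) (w : ℝ) : Set ℝ := {x | ∃ u ≥ (0:ℝ), x = u * w - K u}

theorem IsLUB.conjugateValues_mono {K : ℝ → ℝ} {w w' k k' : ℝ}
    (hk : IsLUB (conjugateValues K w) k) (hk' : IsLUB (conjugateValues K w') k')
    (hw : w ≤ w') : k ≤ k' := by
  refine hk.2 ?_
  rintro x ⟨u, hu, rfl⟩
  calc u * w - K u ≤ u * w' - K u := by gcongr
    _ ≤ k' := hk'.1 ⟨u, hu, rfl⟩

theorem le_of_isLUB_stretchedExp_conjugateValues {η₀ η₁ η₂ M w k : ℝ} (h1 : 0 < η₁)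
    (h2 : η₂ ≠ 0) (hM : 2 * η₀ ≤ M) (hw : 0 < w) (hwM : w < M)
    (hk : IsLUB (conjugateValues (fun u => u * (η₀ * exp (-η₁ * u⁻¹ ^ η₂))) w) k) :
    η₁ ^ (1 / η₂) / 2 * w / log (M / w) ^ (1 / η₂) ≤ k := by
  have hL : 0 < log (M / w) := log_pos ((one_lt_div hw).2 hwM)
  set u := (η₁ / log (M / w)) ^ (1 / η₂) with hu_def
  have hu : 0 < u := by positivity
  have hu_pow : u ^ η₂ = η₁ / log (M / w) := by
    rw [hu_def, one_div, rpow_inv_rpow (by positivity) h2]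
  have hexp : exp (-η₁ * u⁻¹ ^ η₂) = w / M := by
    rw [inv_rpow hu.le, hu_pow, inv_div,
      show -η₁ * (log (M / w) / η₁) = -log (M / w) by field_simp, exp_neg,
      exp_log (div_pos (hw.trans hwM) hw), inv_div]
  have hsmall : η₀ * (w / M) ≤ w / 2 := by
    rw [← mul_div_assoc, div_le_div_iff₀ (by linarith) two_pos]
    nlinarith
  calc η₁ ^ (1 / η₂) / 2 * w / log (M / w) ^ (1 / η₂) = u * w - u * (w / 2) := by
        rw [hu_def, div_rpow h1.le hL.le]; ring
    _ ≤ u * w - u * (η₀ * exp (-η₁ * u⁻¹ ^ η₂)) := by rw [hexp]; gcongr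
    _ ≤ k := hk.1 ⟨u, hu.le, rfl⟩

theorem div_two_rpow_mul_log_rpow_neg_le {M w c p : ℝ} (hM : 1 ≤ M) (hw : 0 < w)
    (hwM : w < M⁻¹) (hc : 0 ≤ c) (hp : 0 ≤ p) :
    c / 2 ^ p * w * log (1 / w) ^ (-p) ≤ c * w / log (M / w) ^ p := by
  have hM0 : 0 < M := by linarith
  have hlogM : log M < log (1 / w) := log_lt_log hM0 (by rwa [one_div, lt_inv_comm₀ hM0 hw])
  have hX : 0 < log (1 / w) := (log_nonneg hM).trans_lt hlogM
  have hL : 0 < log (M / w) :=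
    log_pos ((one_lt_div hw).2 (by linarith [inv_le_one_of_one_le₀ hM]))
  have hL2 : log (M / w) ≤ 2 * log (1 / w) := by
    rw [div_eq_mul_one_div M w, log_mul hM0.ne' (by positivity)]; linarith
  calc c / 2 ^ p * w * log (1 / w) ^ (-p) = c * w / (2 * log (1 / w)) ^ p := by
        rw [rpow_neg hX.le, mul_rpow zero_le_two hX.le]; field_simp
    _ ≤ c * w / log (M / w) ^ p := by gcongr

theorem continuousOn_inv_mul_log_rpow {M z a p : ℝ} (hz : 0 < z) (haM : a < M) :
    ContinuousOn (fun w => w⁻¹ * log (M / w) ^ p) (Icc z a) := by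
  have hpos : ∀ w ∈ Icc z a, 0 < w ∧ 0 < log (M / w) := fun w hw =>
    have hw0 : 0 < w := hz.trans_le hw.1
    ⟨hw0, log_pos ((one_lt_div hw0).2 (hw.2.trans_lt haM))⟩
  refine (continuousOn_inv₀.mono fun w hw => (hpos w hw).1.ne').mul
    (ContinuousOn.rpow_const ?_ fun w hw => Or.inl (hpos w hw).2.ne')
  refine continuousOn_log.comp
    (continuousOn_const.div continuousOn_id fun w hw => (hpos w hw).1.ne') fun w hw => ?_
  simp [(hpos w hw).1.ne', ((hpos w hw).1.trans_le hw.2).trans haM |>.ne']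

theorem integral_inv_mul_log_rpow {M z a p : ℝ} (hp : p + 1 ≠ 0) (hz : 0 < z) (hza : z ≤ a)
    (haM : a < M) :
    ∫ w in z..a, w⁻¹ * log (M / w) ^ p
      = (log (M / z) ^ (p + 1) - log (M / a) ^ (p + 1)) / (p + 1) := by
  have hderiv : ∀ w ∈ uIcc z a,
      HasDerivAt (fun w => -(log (M / w) ^ (p + 1) / (p + 1))) (w⁻¹ * log (M / w) ^ p) w := by
    intro w hw
    rw [uIcc_of_le hza] at hw
    have hw0 : 0 < w := hz.trans_le hw.1
    have hM : 0 < M := hw0.trans_le hw.2 |>.trans haM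
    have hL : 0 < log (M / w) := log_pos ((one_lt_div hw0).2 (hw.2.trans_lt haM))
    have hdiv : HasDerivAt (fun w => M / w) (-(M / w ^ 2)) w := by
      simpa [div_eq_mul_inv] using (hasDerivAt_inv hw0.ne').const_mul M
    have := (((hdiv.log (div_pos hM hw0).ne').rpow_const (p := p + 1)
      (Or.inl hL.ne')).div_const (p + 1)).neg
    refine this.congr_deriv ?_
    rw [add_sub_cancel_right]
    field_simp
  have hint : IntervalIntegrable (fun w => w⁻¹ * log (M / w) ^ p) MeasureTheory.volume z a :=
    (continuousOn_inv_mul_log_rpow hz haM).intervalIntegrable_of_Icc hza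
  rw [integral_eq_sub_of_hasDerivAt hderiv hint]
  ring

theorem integral_inv_mem_Ioc {k : ℝ → ℝ} {c p M z a : ℝ} (hc : 0 < c) (hp : 0 ≤ p) (hz : 0 < z)
    (hza : z < a) (haM : a < M) (hk : ∀ w ∈ Icc z a, c * w / log (M / w) ^ p ≤ k w)
    (hmono : MonotoneOn k (Icc z a)) :
    ∫ w in z..a, (k w)⁻¹ ∈ Ioc 0 (c⁻¹ / (p + 1) * log (M / z) ^ (p + 1)) := by
  have hL : ∀ w ∈ Icc z a, 0 < log (M / w) := fun w hw =>
    log_pos ((one_lt_div (hz.trans_le hw.1)).2 (hw.2.trans_lt haM))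
  have hkpos : ∀ w ∈ Icc z a, 0 < k w := fun w hw =>
    have := hL w hw
    have := hz.trans_le hw.1
    (by positivity : 0 < c * w / log (M / w) ^ p).trans_le (hk w hw)
  have hint : IntervalIntegrable (fun w => (k w)⁻¹) MeasureTheory.volume z a := by
    refine AntitoneOn.intervalIntegrable ?_
    rw [uIcc_of_le hza.le]
    exact fun x hx y hy hxy => inv_anti₀ (hkpos x hx) (hmono hx hy hxy)
  refine ⟨intervalIntegral_pos_of_pos_on hint
    (fun w hw => inv_pos.2 (hkpos w (Ioo_subset_Icc_self hw))) hza, ?_⟩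
  have hLa : 0 ≤ log (M / a) ^ (p + 1) := rpow_nonneg (hL a ⟨hza.le, le_rfl⟩).le _
  calc ∫ w in z..a, (k w)⁻¹ ≤ ∫ w in z..a, c⁻¹ * (w⁻¹ * log (M / w) ^ p) := by
        refine integral_mono_on hza.le hint
          (((continuousOn_inv_mul_log_rpow hz haM).const_smul c⁻¹).intervalIntegrable_of_Icc
            hza.le)
          fun w hw => ?_
        have := hL w hw
        have := hz.trans_le hw.1
        calc (k w)⁻¹ ≤ (c * w / log (M / w) ^ p)⁻¹ := inv_anti₀ (by positivity) (hk w hw)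
          _ = c⁻¹ * (w⁻¹ * log (M / w) ^ p) := by field_simp
    _ = c⁻¹ * ((log (M / z) ^ (p + 1) - log (M / a) ^ (p + 1)) / (p + 1)) := by
        rw [integral_const_mul, integral_inv_mul_log_rpow (by linarith) hz hza.le haM]
    _ ≤ c⁻¹ * (log (M / z) ^ (p + 1) / (p + 1)) := by gcongr; linarith
    _ = c⁻¹ / (p + 1) * log (M / z) ^ (p + 1) := by ring

theorem le_mul_exp_of_le_log_rpow {F G : ℝ → ℝ} {a M A r t : ℝ} (hM : 0 < M) (hA : 0 < A)
    (hr : 0 < r) (hG : AntitoneOn G (Ioi 0)) (hGF : ∀ z ∈ Ioo 0 a, G (F z) = z)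
    (hGa : ∀ t > 0, G t < a) (hF : ∀ z ∈ Ioo 0 a, F z ∈ Ioc 0 (A * log (M / z) ^ r⁻¹))
    (ht : 0 < t) :
    G t ≤ M * exp (-A⁻¹ ^ r * t ^ r) := by
  set z := M * exp (-A⁻¹ ^ r * t ^ r)
  have hz : 0 < z := by positivity
  rcases le_or_gt a z with haz | hza
  · exact (hGa t ht).le.trans haz
  have hlog : log (M / z) = (t / A) ^ r := by
    rw [div_mul_cancel_left₀ hM.ne', log_inv, log_exp, neg_mul, neg_neg,
      ← mul_rpow (by positivity) ht.le, inv_mul_eq_div]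
  obtain ⟨hFz, hFzt⟩ := hF z ⟨hz, hza⟩
  rw [hlog, ← rpow_mul (by positivity), mul_inv_cancel₀ hr.ne', rpow_one,
    mul_div_cancel₀ _ hA.ne'] at hFzt
  calc G t ≤ G (F z) := hG hFz ht hFzt
    _ = z := hGF z ⟨hz, hza⟩

theorem stmt17_general
    (η₀ η₁ η₂ a : ℝ) (h1 : 0 < η₁) (h2 : 0 < η₂)
    (ha : a ∈ Set.Ioc (0:ℝ) (1 / 4))
    (Kstar : ℝ → ℝ)
    (hKstar : ∀ w ∈ Set.Ioc (0:ℝ) a,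
      IsLUB {x | ∃ u ≥ (0:ℝ), x = u * w - u * (η₀ * Real.exp (-η₁ * (u⁻¹) ^ η₂))}
        (Kstar w))
    (Finv : ℝ → ℝ)
    (hFinv : ∀ z ∈ Set.Ioo (0:ℝ) a, Finv (∫ w in z..a, (Kstar w)⁻¹) = z)
    (hFinv_range : ∀ t > (0:ℝ), Finv t ∈ Set.Ioo (0:ℝ) a)
    (hFinv_anti : AntitoneOn Finv (Set.Ioi 0)) :
    (∃ c > (0:ℝ), ∃ w₀ > (0:ℝ), ∀ w ∈ Set.Ioo (0:ℝ) w₀,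
      c * w * (Real.log (1 / w)) ^ (-(1 / η₂)) ≤ Kstar w) ∧
    (∃ C > (0:ℝ), ∃ C' > (0:ℝ), ∀ t > (0:ℝ),
      Finv t ≤ C * Real.exp (-C' * t ^ (η₂ / (1 + η₂)))) := by
  obtain ⟨ha0, ha1⟩ := ha
  set M := max (2 * η₀) 1
  set p := 1 / η₂
  set c := η₁ ^ p / 2
  have hM : 1 ≤ M := le_max_right _ _
  have hp : 0 ≤ p := by positivity
  have hc : 0 < c := by positivity
  have hK : ∀ w ∈ Ioc 0 a, c * w / log (M / w) ^ p ≤ Kstar w := fun w hw =>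
    le_of_isLUB_stretchedExp_conjugateValues h1 h2.ne' (le_max_left _ _) hw.1
      (by linarith [hw.2]) (hKstar w hw)
  refine ⟨⟨c / 2 ^ p, by positivity, min a M⁻¹, lt_min ha0 (by positivity), fun w hw => ?_⟩,
    ?_⟩
  · calc c / 2 ^ p * w * log (1 / w) ^ (-p) ≤ c * w / log (M / w) ^ p :=
          div_two_rpow_mul_log_rpow_neg_le hM hw.1 (hw.2.trans_le (min_le_right _ _)) hc.le hp
      _ ≤ Kstar w := hK w ⟨hw.1, (hw.2.trans_le (min_le_left _ _)).le⟩
  have hr : η₂ / (1 + η₂) = (p + 1)⁻¹ := by simp only [p]; field_simp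
  refine ⟨M, by positivity, (c⁻¹ / (p + 1))⁻¹ ^ (η₂ / (1 + η₂)), by positivity, fun t ht =>
    le_mul_exp_of_le_log_rpow (by positivity) (by positivity) (by positivity) hFinv_anti hFinv
      (fun t ht => (hFinv_range t ht).2) (fun z hz => ?_) ht⟩
  rw [hr, inv_inv]
  have hIcc : ∀ w ∈ Icc z a, w ∈ Ioc 0 a := fun w hw => ⟨hz.1.trans_le hw.1, hw.2⟩
  exact integral_inv_mem_Ioc hc hp hz.1 hz.2 (by linarith) (fun w hw => hK w (hIcc w hw))
    fun w hw w' hw' hww' =>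
      (hKstar w (hIcc w hw)).conjugateValues_mono (hKstar w' (hIcc w' hw')) hww'

/-- Decay rate from stretched-exponential `β(s) = η₀ exp(-η₁ s^{η₂})`: logarithmically
corrected lower bound on `K*` and stretched-exponential decay of `F_a⁻¹`. -/
theorem stmt17
    (η₀ η₁ η₂ a : ℝ) (h0 : 0 < η₀) (h1 : 0 < η₁) (h2 : 0 < η₂)
    (ha : a ∈ Set.Ioc (0:ℝ) (1 / 4))
    (Kstar : ℝ → ℝ)
    (hKstar : ∀ w ∈ Set.Ioc (0:ℝ) a,
      IsLUB {x | ∃ u ≥ (0:ℝ), x = u * w - u * (η₀ * Real.exp (-η₁ * (u⁻¹) ^ η₂))}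
        (Kstar w))
    (Finv : ℝ → ℝ)
    (hFinv : ∀ z ∈ Set.Ioo (0:ℝ) a, Finv (∫ w in z..a, (Kstar w)⁻¹) = z)
    (hFinv_range : ∀ t > (0:ℝ), Finv t ∈ Set.Ioo (0:ℝ) a)
    (hFinv_anti : AntitoneOn Finv (Set.Ioi 0)) :
    (∃ c > (0:ℝ), ∃ w₀ > (0:ℝ), ∀ w ∈ Set.Ioo (0:ℝ) w₀,
      c * w * (Real.log (1 / w)) ^ (-(1 / η₂)) ≤ Kstar w) ∧
    (∃ C > (0:ℝ), ∃ C' > (0:ℝ), ∀ t > (0:ℝ),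
      Finv t ≤ C * Real.exp (-C' * t ^ (η₂ / (1 + η₂)))) :=
  stmt17_general η₀ η₁ η₂ a h1 h2 ha Kstar hKstar Finv hFinv hFinv_range hFinv_anti
end

section
/- Weak dissipation to decay for weak Poincaré-type processes: suppose H: [0,∞) → (0,∞) and D: [0,∞) → [0,∞) satisfy H'(t) = -D(t), and for all s > 0, H(t) ≤ s D(t) + β(s) Φ₀, where Φ₀ > 0 is a constant and β is decreasing with β(s) → 0. Then D(t)/Φ₀ ≥ K*(H(t)/Φ₀), where K*(w) = sup_{u ≥ 0}{uw - u β(1/u)}. Consequently, if H(0) ≤ a Φ₀, then H(t) ≤ Φ₀ F_a^{-1}(t) with F_a(z) = ∫_z^a dw/K*(w). -/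
open Real Set Filter intervalIntegral

/-!
Dividing the weak inequality at `s = 1/u` by `Φ₀` gives `D/Φ₀ ≥ u H/Φ₀ - u β(1/u)` for every
`u > 0`, and taking the supremum over `u` gives `D/Φ₀ ≥ K*(H/Φ₀)`. As a supremum of affine
functions `K*` is convex, hence continuous, and it is positive because `β → 0`. So `w = H/Φ₀`
satisfies `w' ≤ -K*(w)`, and `τ ↦ F_a(w τ) - τ` has derivative `-w'/K*(w) - 1 ≥ 0`
(Bihari–LaSalle); thus `F_a(w t) ≥ t + F_a(w 0) ≥ t`, and the decreasing `F_a⁻¹` turns this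
into `w t ≤ F_a⁻¹(t)`.
-/

section Conjugate

variable {β K : ℝ → ℝ}

lemma le_of_isLUB_conjugate
    (hK : ∀ w > (0:ℝ), IsLUB {x | ∃ u ≥ (0:ℝ), x = u * w - u * β u⁻¹} (K w))
    {w u : ℝ} (hw : 0 < w) (hu : 0 ≤ u) : u * w - u * β u⁻¹ ≤ K w :=
  (hK w hw).1 ⟨u, hu, rfl⟩

lemma pos_of_isLUB_conjugate
    (hK : ∀ w > (0:ℝ), IsLUB {x | ∃ u ≥ (0:ℝ), x = u * w - u * β u⁻¹} (K w))
    (hβ : Tendsto β atTop (nhds 0)) {w : ℝ} (hw : 0 < w) : 0 < K w := by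
  obtain ⟨s, hβs, hs⟩ : ∃ s, β s < w ∧ 0 < s :=
    ((hβ.eventually_lt_const hw).and (eventually_gt_atTop 0)).exists
  have hle := le_of_isLUB_conjugate hK hw (inv_pos.2 hs).le
  rw [inv_inv] at hle
  have : 0 < s⁻¹ * (w - β s) := mul_pos (inv_pos.2 hs) (sub_pos.2 hβs)
  linarith

lemma convexOn_of_isLUB_conjugate
    (hK : ∀ w > (0:ℝ), IsLUB {x | ∃ u ≥ (0:ℝ), x = u * w - u * β u⁻¹} (K w)) :
    ConvexOn ℝ (Ioi 0) K := by
  refine ⟨convex_Ioi 0, fun x hx y hy p q hp hq hpq => ?_⟩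
  simp only [smul_eq_mul]
  refine (hK _ (convex_Ioi 0 hx hy hp hq hpq)).2 ?_
  rintro _ ⟨u, hu, rfl⟩
  have hx' := mul_le_mul_of_nonneg_left (le_of_isLUB_conjugate hK hx hu) hp
  have hy' := mul_le_mul_of_nonneg_left (le_of_isLUB_conjugate hK hy hu) hq
  linear_combination hx' + hy' + (u * β u⁻¹) * hpq

lemma conjugate_le_div_of_forall_le
    (hK : ∀ w > (0:ℝ), IsLUB {x | ∃ u ≥ (0:ℝ), x = u * w - u * β u⁻¹} (K w))
    {h d Φ : ℝ} (hΦ : 0 < Φ) (hh : 0 < h) (hd : 0 ≤ d)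
    (hweak : ∀ s > (0:ℝ), h ≤ s * d + β s * Φ) : K (h / Φ) ≤ d / Φ := by
  refine (hK _ (div_pos hh hΦ)).2 ?_
  rintro _ ⟨u, hu, rfl⟩
  rcases hu.eq_or_lt with rfl | hu
  · simpa using div_nonneg hd hΦ.le
  rw [le_div_iff₀ hΦ]
  calc (u * (h / Φ) - u * β u⁻¹) * Φ = u * h - u * β u⁻¹ * Φ := by field_simp
    _ ≤ u * (u⁻¹ * d + β u⁻¹ * Φ) - u * β u⁻¹ * Φ := by gcongr; exact hweak _ (inv_pos.2 hu)
    _ = d := by field_simp; ring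

end Conjugate

section BihariLaSalle

variable {K : ℝ → ℝ}

lemma hasDerivAt_integral_inv (hKc : ContinuousOn K (Ioi 0)) (hKpos : ∀ w > (0:ℝ), 0 < K w)
    {a z : ℝ} (ha : 0 < a) (hz : 0 < z) :
    HasDerivAt (fun z => ∫ w in z..a, (K w)⁻¹) (-(K z)⁻¹) z := by
  have hc : ContinuousOn (fun w => (K w)⁻¹) (Ioi 0) := hKc.inv₀ fun w hw => (hKpos w hw).ne'
  have hint : IntervalIntegrable (fun w => (K w)⁻¹) MeasureTheory.volume z a :=
    (hc.mono fun _ hw => (lt_min hz ha).trans_le hw.1).intervalIntegrable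
  exact integral_hasDerivAt_left hint (hc.stronglyMeasurableAtFilter isOpen_Ioi z hz)
    (hc.continuousAt (isOpen_Ioi.mem_nhds hz))

lemma le_integral_inv_of_le_neg_deriv (hKc : ContinuousOn K (Ioi 0))
    (hKpos : ∀ w > (0:ℝ), 0 < K w) {g g' : ℝ → ℝ} {a : ℝ} (ha : 0 < a)
    (hg : ∀ t ≥ (0:ℝ), HasDerivAt g (g' t) t) (hgpos : ∀ t ≥ (0:ℝ), 0 < g t)
    (hKg : ∀ t ≥ (0:ℝ), K (g t) ≤ -g' t) (hg0 : g 0 ≤ a) {t : ℝ} (ht : 0 ≤ t) :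
    t ≤ ∫ w in g t..a, (K w)⁻¹ := by
  set F : ℝ → ℝ := fun z => ∫ w in z..a, (K w)⁻¹
  have hφ : ∀ τ ≥ (0:ℝ), HasDerivAt (fun τ => F (g τ) - τ) (-(K (g τ))⁻¹ * g' τ - 1) τ :=
    fun τ hτ => ((hasDerivAt_integral_inv hKc hKpos ha (hgpos τ hτ)).comp τ (hg τ hτ)).sub
      (hasDerivAt_id τ)
  have hmono : MonotoneOn (fun τ => F (g τ) - τ) (Ici 0) := by
    refine monotoneOn_of_hasDerivWithinAt_nonneg (convex_Ici 0)
      (fun τ hτ => (hφ τ hτ).continuousAt.continuousWithinAt)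
      (fun τ hτ => (hφ τ (interior_subset hτ)).hasDerivWithinAt) fun τ hτ => ?_
    have hτ : (0:ℝ) ≤ τ := interior_subset hτ
    rw [neg_mul_comm, sub_nonneg]
    exact (one_le_inv_mul₀ (hKpos _ (hgpos τ hτ))).2 (hKg τ hτ)
  have hF0 : 0 ≤ F (g 0) := integral_nonneg hg0 fun w hw =>
    inv_nonneg.2 (hKpos w ((hgpos 0 le_rfl).trans_le hw.1)).le
  have := hmono self_mem_Ici ht ht
  simp only [sub_zero] at this
  linarith

lemma lt_of_le_integral_inv (hKpos : ∀ w > (0:ℝ), 0 < K w) {a z t : ℝ} (ha : 0 < a)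
    (ht : 0 < t) (h : t ≤ ∫ w in z..a, (K w)⁻¹) : z < a := by
  by_contra! hza
  rw [integral_symm] at h
  have : 0 ≤ ∫ w in a..z, (K w)⁻¹ :=
    integral_nonneg hza fun w hw => inv_nonneg.2 (hKpos w (ha.trans_le hw.1)).le
  linarith

end BihariLaSalle

theorem stmt18_general
    (Φ₀ a : ℝ) (hΦ : 0 < Φ₀) (ha : 0 < a)
    (β : ℝ → ℝ)
    (hβ_lim : Tendsto β atTop (nhds 0))
    (H D : ℝ → ℝ)
    (hH : ∀ t ≥ (0:ℝ), HasDerivAt H (-D t) t)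
    (hD : ∀ t ≥ (0:ℝ), 0 ≤ D t)
    (hHpos : ∀ t ≥ (0:ℝ), 0 < H t)
    (hweak : ∀ s > (0:ℝ), ∀ t ≥ (0:ℝ), H t ≤ s * D t + β s * Φ₀)
    (Kstar : ℝ → ℝ)
    (hKstar : ∀ w > (0:ℝ), IsLUB {x | ∃ u ≥ (0:ℝ), x = u * w - u * β u⁻¹} (Kstar w))
    (Finv : ℝ → ℝ)
    (hFinv : ∀ z ∈ Set.Ioo (0:ℝ) a, Finv (∫ w in z..a, (Kstar w)⁻¹) = z)
    (hFinv_anti : AntitoneOn Finv (Set.Ioi 0))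
    (hH0 : H 0 ≤ a * Φ₀) :
    (∀ t ≥ (0:ℝ), Kstar (H t / Φ₀) ≤ D t / Φ₀) ∧
    (∀ t > (0:ℝ), H t ≤ Φ₀ * Finv t) := by
  have hdiss : ∀ t ≥ (0:ℝ), Kstar (H t / Φ₀) ≤ D t / Φ₀ := fun t ht =>
    conjugate_le_div_of_forall_le hKstar hΦ (hHpos t ht) (hD t ht) fun s hs => hweak s hs t ht
  refine ⟨hdiss, fun t ht => ?_⟩
  have hKpos : ∀ w > (0:ℝ), 0 < Kstar w := fun w hw => pos_of_isLUB_conjugate hKstar hβ_lim hw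
  have hKc := (convexOn_of_isLUB_conjugate hKstar).continuousOn isOpen_Ioi
  have hgpos : ∀ t ≥ (0:ℝ), 0 < H t / Φ₀ := fun t ht => div_pos (hHpos t ht) hΦ
  have hFt : t ≤ ∫ w in H t / Φ₀..a, (Kstar w)⁻¹ :=
    le_integral_inv_of_le_neg_deriv hKc hKpos ha (fun t ht => (hH t ht).div_const Φ₀) hgpos
      (fun t ht => by simpa [neg_div] using hdiss t ht) ((div_le_iff₀ hΦ).2 hH0) ht.le
  have hgt : H t / Φ₀ ∈ Ioo 0 a := ⟨hgpos t ht.le, lt_of_le_integral_inv hKpos ha ht hFt⟩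
  have hle := hFinv_anti ht (ht.trans_le hFt) hFt
  rw [hFinv _ hgt] at hle
  rwa [div_le_iff₀' hΦ] at hle

/-- Weak dissipation to decay: the weak dissipation inequality `H ≤ sD + β(s)Φ₀`
yields `D/Φ₀ ≥ K*(H/Φ₀)` and hence `H(t) ≤ Φ₀ F_a⁻¹(t)`. -/
theorem stmt18
    (Φ₀ a : ℝ) (hΦ : 0 < Φ₀) (ha : 0 < a)
    (β : ℝ → ℝ) (hβ_anti : AntitoneOn β (Set.Ioi 0))
    (hβ_lim : Tendsto β atTop (nhds 0))
    (H D : ℝ → ℝ)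
    (hH : ∀ t ≥ (0:ℝ), HasDerivAt H (-D t) t)
    (hD : ∀ t ≥ (0:ℝ), 0 ≤ D t)
    (hHpos : ∀ t ≥ (0:ℝ), 0 < H t)
    (hweak : ∀ s > (0:ℝ), ∀ t ≥ (0:ℝ), H t ≤ s * D t + β s * Φ₀)
    (Kstar : ℝ → ℝ)
    (hKstar : ∀ w > (0:ℝ), IsLUB {x | ∃ u ≥ (0:ℝ), x = u * w - u * β u⁻¹} (Kstar w))
    (Finv : ℝ → ℝ)
    (hFinv : ∀ z ∈ Set.Ioo (0:ℝ) a, Finv (∫ w in z..a, (Kstar w)⁻¹) = z)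
    (hFinv_range : ∀ t > (0:ℝ), Finv t ∈ Set.Ioo (0:ℝ) a)
    (hFinv_anti : AntitoneOn Finv (Set.Ioi 0))
    (hH0 : H 0 ≤ a * Φ₀) :
    (∀ t ≥ (0:ℝ), Kstar (H t / Φ₀) ≤ D t / Φ₀) ∧
    (∀ t > (0:ℝ), H t ≤ Φ₀ * Finv t) :=
  stmt18_general Φ₀ a hΦ ha β hβ_lim H D hH hD hHpos hweak Kstar hKstar Finv hFinv hFinv_anti hH0
end
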